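/- arXiv:1002.2440 — 6 statements merged into one kernel-verified Lean document; each statement's English description precedes it below -/
import Mathlib

section
/- If a projective deterministic list update algorithm A is strictly c-competitive on lists with two items, then A is strictly c-competitive on lists of arbitrary length (in the partial cost model). -/
/-- `x` is in front of `y` in list state `L`. -/
abbrev Before {I : Type} [DecidableEq I] (x y : I) (L : List I) : Prop :=
  L.idxOf x < L.idxOf y

/-- Projection of a request sequence to the requests to `x` and `y`. -/
def proj2 {I : Type} [DecidableEq I] (x y : I) (σ : List I) : List I :=
  σ.filter (fun z => decide (z = x ∨ z = y))

/-- Number of (unordered) pairs whose relative order differs between `L` and `M`,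
i.e. the minimal number of adjacent transpositions (Kendall tau distance). -/
def numInv {I : Type} [DecidableEq I] (L M : List I) : ℕ :=
  ((L.product L).filter
    (fun p => decide (L.idxOf p.1 < L.idxOf p.2 ∧ M.idxOf p.2 < M.idxOf p.1))).length

/-- Total cost, in the partial cost model, of serving `σ` with the online algorithm
whose state function is `S`: for each request `z` after prefix `pref`, pay the number
of paid exchanges from `S pref` to `S (pref ++ [z])` plus the position of `z` there. -/
def totalCostAux {I : Type} [DecidableEq I] (S : List I → List I) :
    List I → List I → ℕ
  | _, [] => 0
  | pref, z :: rest =>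
      numInv (S pref) (S (pref ++ [z])) + (S (pref ++ [z])).idxOf z
        + totalCostAux S (pref ++ [z]) rest

def totalCost {I : Type} [DecidableEq I] (S : List I → List I) (σ : List I) : ℕ :=
  totalCostAux S [] σ

/-- Projected pairwise cost `A_{xy}(σ)`: exchanges of the pair `x,y` plus accesses to a
member of the pair that is behind the other one. -/
def pairCostAux {I : Type} [DecidableEq I] (S : List I → List I) (x y : I) :
    List I → List I → ℕ
  | _, [] => 0
  | pref, z :: rest =>
      (if (Before x y (S pref) ∧ Before y x (S (pref ++ [z]))) ∨
          (Before y x (S pref) ∧ Before x y (S (pref ++ [z]))) then 1 else 0)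
      + (if (z = x ∧ Before y x (S (pref ++ [z]))) ∨
           (z = y ∧ Before x y (S (pref ++ [z]))) then 1 else 0)
      + pairCostAux S x y (pref ++ [z]) rest

def pairCost {I : Type} [DecidableEq I] (S : List I → List I) (x y : I) (σ : List I) : ℕ :=
  pairCostAux S x y [] σ

/-- Optimal offline cost of serving `σ` starting from list state `L0`. -/
noncomputable def optCost {I : Type} [DecidableEq I] (L0 σ : List I) : ℕ :=
  sInf { c | ∃ S : List I → List I, S [] = L0 ∧ (∀ τ, (S τ).Perm L0) ∧ totalCost S σ = c }

/-- A deterministic algorithm is projective if the relative order of any two items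
depends only on the requests to these two items. -/
def Projective {I : Type} [DecidableEq I] (S : List I → List I) : Prop :=
  ∀ (x y : I) (σ : List I), Before x y (S σ) ↔ Before x y (S (proj2 x y σ))

/-!
The cost of any algorithm splits as a sum, over unordered pairs `{x, y}`, of pairwise costs:
exchanges of `x, y` plus accesses to whichever of `x, y` is behind. For a projective algorithm
the pairwise cost on `σ` equals its cost on the two-item sequence `σ_xy`, hence is at most
`c · OPT(σ_xy)`. Conversely, the pairwise cost of an optimal offline algorithm `T` is at least
`OPT(σ_xy)`: the two-item algorithm that adopts `T`'s relative order of `x, y` only when `x` or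
`y` is requested pays no more than `T` does on that pair. Summing over pairs gives
`A(σ) ≤ c · OPT(σ)`; here `c ≥ 0` since requesting the rear item of a pair always costs something.
-/

section ListUpdate

variable {I : Type} [DecidableEq I]

lemma List.idxOf_ne_idxOf {x y : I} {L : List I} (hx : x ∈ L) (hxy : x ≠ y) :
    L.idxOf x ≠ L.idxOf y :=
  fun h => hxy ((List.idxOf_inj hx).1 h)

lemma ite_or_eq_add {P Q : Prop} [Decidable P] [Decidable Q] (h : ¬(P ∧ Q)) :
    (if P ∨ Q then 1 else 0 : ℕ) = (if P then 1 else 0) + (if Q then 1 else 0) := by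
  split_ifs <;> tauto

def exchCost (x y : I) (L M : List I) : ℕ :=
  if (Before x y L ∧ Before y x M) ∨ (Before y x L ∧ Before x y M) then 1 else 0

def accessCost (x y z : I) (M : List I) : ℕ :=
  if (z = x ∧ Before y x M) ∨ (z = y ∧ Before x y M) then 1 else 0

def pairStepCost (x y z : I) (L M : List I) : ℕ :=
  exchCost x y L M + accessCost x y z M

lemma pairCostAux_nil (S : List I → List I) (x y : I) (pref : List I) :
    pairCostAux S x y pref [] = 0 := rfl

lemma pairCostAux_cons (S : List I → List I) (x y z : I) (pref rest : List I) :
    pairCostAux S x y pref (z :: rest) =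
      pairStepCost x y z (S pref) (S (pref ++ [z])) + pairCostAux S x y (pref ++ [z]) rest :=
  rfl

lemma totalCostAux_cons (S : List I → List I) (z : I) (pref rest : List I) :
    totalCostAux S pref (z :: rest) =
      numInv (S pref) (S (pref ++ [z])) + (S (pref ++ [z])).idxOf z
        + totalCostAux S (pref ++ [z]) rest :=
  rfl

def orderedPairs (L0 : List I) : Finset (I × I) :=
  (L0.toFinset ×ˢ L0.toFinset).filter (fun p => L0.idxOf p.1 < L0.idxOf p.2)

lemma mem_orderedPairs {L0 : List I} {p : I × I} :
    p ∈ orderedPairs L0 ↔ (p.1 ∈ L0 ∧ p.2 ∈ L0) ∧ L0.idxOf p.1 < L0.idxOf p.2 := by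
  simp [orderedPairs]

lemma sum_product_eq_sum_orderedPairs {M : Type*} [AddCommMonoid M] (L0 : List I)
    (f : I × I → M) (hdiag : ∀ a, f (a, a) = 0) :
    ∑ p ∈ L0.toFinset ×ˢ L0.toFinset, f p = ∑ p ∈ orderedPairs L0, (f p + f p.swap) := by
  have hsplit : ∀ p ∈ L0.toFinset ×ˢ L0.toFinset, f p =
      (if L0.idxOf p.1 < L0.idxOf p.2 then f p else 0) +
        (if L0.idxOf p.2 < L0.idxOf p.1 then f p else 0) := by
    rintro ⟨a, b⟩ hp
    simp only [Finset.mem_product, List.mem_toFinset] at hp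
    rcases lt_trichotomy (L0.idxOf a) (L0.idxOf b) with h | h | h
    · simp [h, h.not_gt]
    · obtain rfl := (List.idxOf_inj hp.1).1 h
      simp [hdiag]
    · simp [h, h.not_gt]
  have hswap : ∑ p ∈ L0.toFinset ×ˢ L0.toFinset,
      (if L0.idxOf p.2 < L0.idxOf p.1 then f p else 0) =
      ∑ p ∈ L0.toFinset ×ˢ L0.toFinset,
        (if L0.idxOf p.1 < L0.idxOf p.2 then f p.swap else 0) := by
    rw [Finset.sum_product, Finset.sum_product, Finset.sum_comm]
    rfl
  rw [Finset.sum_congr rfl hsplit, Finset.sum_add_distrib, hswap, ← Finset.sum_add_distrib,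
    orderedPairs, Finset.sum_filter]
  simp only [← ite_add_zero]

lemma numInv_eq_sum {L0 L M : List I} (hnd : L0.Nodup) (hL : L.Perm L0) :
    numInv L M = ∑ p ∈ L0.toFinset ×ˢ L0.toFinset,
      (if Before p.1 p.2 L ∧ Before p.2 p.1 M then 1 else 0) := by
  have hprod : (L.product L).Perm (L0.product L0) := hL.product hL
  have hnd2 : (L0.product L0).Nodup := hnd.product hnd
  rw [numInv, (hprod.filter _).length_eq,
    ← List.toFinset_card_of_nodup (hnd2.filter _), List.toFinset_filter,
    ← Finset.card_filter]
  congr 1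
  ext ⟨a, b⟩
  simp [show L0.product L0 = L0 ×ˢ L0 from rfl]

lemma idxOf_eq_card_before {M : List I} (hnd : M.Nodup) (z : I) :
    M.idxOf z = (M.toFinset.filter (fun b => Before b z M)).card := by
  have htake : M.toFinset.filter (fun b => Before b z M) = (M.take (M.idxOf z)).toFinset := by
    ext b
    simp only [Finset.mem_filter, List.mem_toFinset]
    exact ⟨fun h => (List.mem_take_iff_idxOf_lt h.1).2 h.2,
      fun h => ⟨List.mem_of_mem_take h, (List.mem_take_iff_idxOf_lt (List.mem_of_mem_take h)).1 h⟩⟩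
  rw [htake, List.toFinset_card_of_nodup (hnd.sublist (List.take_sublist _ _)), List.length_take,
    min_eq_left (List.idxOf_le_length)]

lemma idxOf_eq_sum {L0 M : List I} (hnd : L0.Nodup) (hM : M.Perm L0) {z : I} (hz : z ∈ L0) :
    M.idxOf z = ∑ p ∈ L0.toFinset ×ˢ L0.toFinset,
      (if p.1 = z ∧ Before p.2 p.1 M then 1 else 0) := by
  rw [idxOf_eq_card_before (hM.nodup_iff.2 hnd) z, List.toFinset_eq_of_perm _ _ hM,
    Finset.card_filter, Finset.sum_product]
  simp [ite_and, Finset.sum_ite_eq', hz]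

lemma numInv_add_idxOf_eq_sum {L0 L M : List I} (hnd : L0.Nodup) (hL : L.Perm L0)
    (hM : M.Perm L0) {z : I} (hz : z ∈ L0) :
    numInv L M + M.idxOf z = ∑ p ∈ orderedPairs L0, pairStepCost p.1 p.2 z L M := by
  rw [numInv_eq_sum hnd hL, idxOf_eq_sum hnd hM hz, ← Finset.sum_add_distrib,
    sum_product_eq_sum_orderedPairs]
  · refine Finset.sum_congr rfl fun p _ => ?_
    rw [pairStepCost, exchCost, accessCost, ite_or_eq_add, ite_or_eq_add]
    · simp only [Prod.fst_swap, Prod.snd_swap, @eq_comm _ z]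
      ring
    all_goals omega
  · intro a
    simp

lemma totalCostAux_eq_sum {L0 : List I} (hnd : L0.Nodup) {S : List I → List I}
    (hS : ∀ τ, (S τ).Perm L0) (σ : List I) (hσ : ∀ z ∈ σ, z ∈ L0) (pref : List I) :
    totalCostAux S pref σ = ∑ p ∈ orderedPairs L0, pairCostAux S p.1 p.2 pref σ := by
  induction σ generalizing pref with
  | nil => simp only [pairCostAux_nil, Finset.sum_const_zero]; rfl
  | cons z rest ih =>
    rw [totalCostAux_cons, numInv_add_idxOf_eq_sum hnd (hS _) (hS _) (hσ z List.mem_cons_self),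
      ih (fun w hw => hσ w (List.mem_cons_of_mem _ hw)), ← Finset.sum_add_distrib]
    rfl

lemma totalCost_eq_sum {L0 : List I} (hnd : L0.Nodup) {S : List I → List I}
    (hS : ∀ τ, (S τ).Perm L0) (σ : List I) (hσ : ∀ z ∈ σ, z ∈ L0) :
    totalCost S σ = ∑ p ∈ orderedPairs L0, pairCost S p.1 p.2 σ :=
  totalCostAux_eq_sum hnd hS σ hσ []

lemma mem_of_mem_proj2 {x y z : I} {σ : List I} (h : z ∈ proj2 x y σ) : z = x ∨ z = y := by
  simpa [proj2] using (List.mem_filter.1 h).2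

lemma proj2_comm (x y : I) (σ : List I) : proj2 x y σ = proj2 y x σ :=
  List.filter_congr fun z _ => by simp [or_comm]

lemma proj2_append_singleton_of_mem {x y z : I} (hz : z = x ∨ z = y) (σ : List I) :
    proj2 x y (σ ++ [z]) = proj2 x y σ ++ [z] := by
  simp [proj2, List.filter_append, hz]

lemma proj2_append_singleton_of_not_mem {x y z : I} (hz : ¬(z = x ∨ z = y)) (σ : List I) :
    proj2 x y (σ ++ [z]) = proj2 x y σ := by
  simp [proj2, List.filter_append, hz]

lemma proj2_cons_of_mem {x y z : I} (hz : z = x ∨ z = y) (σ : List I) :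
    proj2 x y (z :: σ) = z :: proj2 x y σ := by
  simp [proj2, hz]

lemma proj2_cons_of_not_mem {x y z : I} (hz : ¬(z = x ∨ z = y)) (σ : List I) :
    proj2 x y (z :: σ) = proj2 x y σ := by
  simp [proj2, hz]

lemma Projective.before_swap {S : List I → List I} (hS : Projective S) (x y : I)
    (σ : List I) : Before y x (S σ) ↔ Before y x (S (proj2 x y σ)) := by
  rw [hS y x σ, proj2_comm]

lemma pairStepCost_congr {x y z : I} {L M L' M' : List I}
    (hL : Before x y L ↔ Before x y L') (hL' : Before y x L ↔ Before y x L')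
    (hM : Before x y M ↔ Before x y M') (hM' : Before y x M ↔ Before y x M') :
    pairStepCost x y z L M = pairStepCost x y z L' M' := by
  simp only [pairStepCost, exchCost, accessCost, hL, hL', hM, hM']

lemma pairStepCost_eq_zero {x y z : I} {L M : List I} (hz : ¬(z = x ∨ z = y))
    (h : Before x y L ↔ Before x y M) (h' : Before y x L ↔ Before y x M) :
    pairStepCost x y z L M = 0 := by
  simp only [pairStepCost, exchCost, accessCost, h, h']
  split_ifs <;> first | rfl | omega | tauto

lemma pairCostAux_proj2 {S : List I → List I} (hS : Projective S) (x y : I) (σ pref : List I) :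
    pairCostAux S x y pref σ = pairCostAux S x y (proj2 x y pref) (proj2 x y σ) := by
  induction σ generalizing pref with
  | nil => rfl
  | cons z rest ih =>
    rw [pairCostAux_cons, ih]
    by_cases hz : z = x ∨ z = y
    · rw [proj2_cons_of_mem hz, pairCostAux_cons, proj2_append_singleton_of_mem hz]
      congr 1
      rw [← proj2_append_singleton_of_mem hz]
      exact pairStepCost_congr (hS x y _) (Projective.before_swap hS x y _) (hS x y _)
        (Projective.before_swap hS x y _)
    · rw [proj2_cons_of_not_mem hz, proj2_append_singleton_of_not_mem hz,
        pairStepCost_eq_zero hz, zero_add]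
      · rw [hS x y, hS x y (pref ++ [z]), proj2_append_singleton_of_not_mem hz]
      · rw [Projective.before_swap hS, Projective.before_swap hS x y (pref ++ [z]),
          proj2_append_singleton_of_not_mem hz]

lemma pairCost_proj2 {S : List I → List I} (hS : Projective S) (x y : I) (σ : List I) :
    pairCost S x y σ = pairCost S x y (proj2 x y σ) :=
  pairCostAux_proj2 hS x y σ []

lemma exchCost_triangle {x y : I} {L M N : List I} (hx : x ∈ M) (hxy : x ≠ y) :
    exchCost x y L N ≤ exchCost x y L M + exchCost x y M N := by
  have := List.idxOf_ne_idxOf hx hxy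
  unfold exchCost
  split_ifs <;> omega

lemma pairStepCost_eq_exchCost {x y z : I} (hz : ¬(z = x ∨ z = y)) (L M : List I) :
    pairStepCost x y z L M = exchCost x y L M := by
  rw [pairStepCost, accessCost, if_neg (by tauto), add_zero]

def pairState (x y : I) (L : List I) : List I := if Before x y L then [x, y] else [y, x]

lemma pairState_perm (x y : I) (A B : List I) : (pairState x y A).Perm (pairState x y B) := by
  unfold pairState
  split_ifs
  exacts [.refl _, .swap _ _ _, .swap _ _ _, .refl _]

lemma before_pairState {x y : I} {A : List I} (hx : x ∈ A) (hxy : x ≠ y) :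
    (Before x y (pairState x y A) ↔ Before x y A) ∧
      (Before y x (pairState x y A) ↔ Before y x A) := by
  have := List.idxOf_ne_idxOf hx hxy
  unfold pairState
  split_ifs <;> simp [List.idxOf_cons_ne _ hxy, List.idxOf_cons_ne _ hxy.symm] <;> omega

lemma orderedPairs_pair {x y : I} (hxy : x ≠ y) : orderedPairs [x, y] = {(x, y)} := by
  ext ⟨a, b⟩
  simp only [mem_orderedPairs, Finset.mem_singleton, Prod.mk.injEq, List.mem_cons,
    List.not_mem_nil, or_false]
  constructor
  · rintro ⟨⟨rfl | rfl, rfl | rfl⟩, h⟩ <;> simp_all [List.idxOf_cons_ne _ hxy]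
  · rintro ⟨rfl, rfl⟩
    simp [List.idxOf_cons_ne _ hxy]

lemma numInv_add_idxOf_pairState {x y z : I} (hxy : x ≠ y) (hz : z = x ∨ z = y)
    {A B : List I} (hxA : x ∈ A) (hxB : x ∈ B) :
    numInv (pairState x y A) (pairState x y B) + (pairState x y B).idxOf z =
      pairStepCost x y z A B := by
  have hperm : ∀ C, (pairState x y C).Perm [x, y] := fun C =>
    (pairState_perm x y C [x, y]).trans (by simp [pairState, List.idxOf_cons_ne _ hxy])
  rw [numInv_add_idxOf_eq_sum (by simp [hxy]) (hperm A) (hperm B) (by simpa using hz),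
    orderedPairs_pair hxy, Finset.sum_singleton]
  have hA := before_pairState hxA hxy
  have hB := before_pairState hxB hxy
  exact pairStepCost_congr hA.1 hA.2 hB.1 hB.2

lemma proj2_eq_singleton {x y : I} {L : List I} (hnd : L.Nodup) (hx : x ∉ L) (hy : y ∈ L) :
    proj2 x y L = [y] := by
  have hfilter : proj2 x y L = L.filter (· = y) :=
    List.filter_congr fun z hz => by simp [show z ≠ x by rintro rfl; exact hx hz]
  rw [hfilter, List.filter_eq, List.count_eq_one_of_mem hnd hy, List.replicate_one]

lemma proj2_eq_pairState {x y : I} {L : List I} (hnd : L.Nodup) (hx : x ∈ L) (hy : y ∈ L)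
    (hxy : x ≠ y) : proj2 x y L = pairState x y L := by
  induction L with
  | nil => simp at hx
  | cons w L ih =>
    rw [List.nodup_cons] at hnd
    by_cases hwx : w = x
    · subst hwx
      have hyL : y ∈ L := by simpa [hxy.symm] using hy
      rw [proj2_cons_of_mem (.inl rfl), proj2_eq_singleton hnd.2 hnd.1 hyL, pairState,
        if_pos (by simp [List.idxOf_cons_ne _ hxy])]
    by_cases hwy : w = y
    · subst hwy
      have hxL : x ∈ L := by simpa [hxy] using hx
      rw [proj2_cons_of_mem (.inr rfl), proj2_comm, proj2_eq_singleton hnd.2 hnd.1 hxL, pairState,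
        if_neg (by simp [List.idxOf_cons_ne _ hxy.symm])]
    · rw [proj2_cons_of_not_mem (by tauto), ih hnd.2 (by simpa [Ne.symm hwx] using hx)
        (by simpa [Ne.symm hwy] using hy)]
      simp [pairState, List.idxOf_cons_ne _ hwx, List.idxOf_cons_ne _ hwy]

/-- The shortest prefix of `σ` containing `n` requests to `x` or `y` (all of `σ` if there is
none). -/
def pairPrefix (x y : I) : ℕ → List I → List I
  | 0, _ => []
  | _, [] => []
  | n + 1, z :: rest => z :: pairPrefix x y (if z = x ∨ z = y then n else n + 1) rest

lemma pairPrefix_append_cons {x y z : I} (hz : z = x ∨ z = y) (p rest : List I) :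
    pairPrefix x y ((proj2 x y p).length + 1) (p ++ z :: rest) = p ++ [z] := by
  induction p with
  | nil => simp [pairPrefix, hz, proj2]
  | cons w p ih =>
    by_cases hw : w = x ∨ w = y
    · rw [proj2_cons_of_mem hw, List.length_cons]
      simp [pairPrefix, hw, ih]
    · rw [proj2_cons_of_not_mem hw]
      simp [pairPrefix, hw, ih]

lemma exchCost_self (x y : I) (L : List I) : exchCost x y L L = 0 := by
  unfold exchCost
  split_ifs <;> omega

lemma pairStepCost_le_exchCost_add {x y z : I} {L M N : List I} (hx : x ∈ M) (hxy : x ≠ y) :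
    pairStepCost x y z L N ≤ exchCost x y L M + pairStepCost x y z M N := by
  have := exchCost_triangle (L := L) (N := N) hx hxy
  unfold pairStepCost
  omega

lemma optCost_le_totalCost {L0 : List I} {T : List I → List I} (hT0 : T [] = L0)
    (hT : ∀ τ, (T τ).Perm L0) (σ : List I) : optCost L0 σ ≤ totalCost T σ :=
  Nat.sInf_le ⟨T, hT0, hT, rfl⟩

lemma exists_totalCost_eq_optCost (L0 σ : List I) :
    ∃ T : List I → List I, T [] = L0 ∧ (∀ τ, (T τ).Perm L0) ∧ totalCost T σ = optCost L0 σ :=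
  Nat.sInf_mem (s := {c | ∃ T : List I → List I, T [] = L0 ∧ (∀ τ, (T τ).Perm L0) ∧
    totalCost T σ = c}) ⟨_, fun _ => L0, rfl, fun _ => .refl _, rfl⟩

/-- The two-item algorithm in the statement copies `T`'s relative order of `x, y`, but only at
requests to `x` or `y`; the `exchCost` term is the exchange it still owes for the swaps `T` made
since the last such request. -/
lemma totalCostAux_lazy_le {x y : I} (hxy : x ≠ y) {T : List I → List I} (hxT : ∀ τ, x ∈ T τ)
    (σ rest p : List I) (hσ : σ = p ++ rest) :
    totalCostAux (fun τ => pairState x y (T (pairPrefix x y τ.length σ)))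
        (proj2 x y p) (proj2 x y rest) ≤
      exchCost x y (T (pairPrefix x y (proj2 x y p).length σ)) (T p) +
        pairCostAux T x y p rest := by
  induction rest generalizing p with
  | nil => exact Nat.zero_le _
  | cons z rest ih =>
    have ih := ih (p ++ [z]) (by simp [hσ])
    rw [pairCostAux_cons]
    by_cases hz : z = x ∨ z = y
    · have hpre : pairPrefix x y (proj2 x y p ++ [z]).length σ = p ++ [z] := by
        rw [hσ, List.length_append, List.length_singleton]
        exact pairPrefix_append_cons hz p rest
      rw [proj2_append_singleton_of_mem hz, hpre, exchCost_self, zero_add] at ih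
      rw [proj2_cons_of_mem hz, totalCostAux_cons]
      simp only [hpre]
      rw [numInv_add_idxOf_pairState hxy hz (hxT _) (hxT _)]
      have := pairStepCost_le_exchCost_add (z := z)
        (L := T (pairPrefix x y (proj2 x y p).length σ)) (N := T (p ++ [z])) (hxT p) hxy
      omega
    · rw [proj2_append_singleton_of_not_mem hz] at ih
      rw [proj2_cons_of_not_mem hz, pairStepCost_eq_exchCost hz]
      have := exchCost_triangle (L := T (pairPrefix x y (proj2 x y p).length σ))
        (N := T (p ++ [z])) (hxT p) hxy
      omega

lemma optCost_proj2_le_pairCost {L0 : List I} (hnd : L0.Nodup) {x y : I} (hx : x ∈ L0)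
    (hy : y ∈ L0) (hxy : x ≠ y) {T : List I → List I} (hT0 : T [] = L0)
    (hT : ∀ τ, (T τ).Perm L0) (σ : List I) :
    optCost (proj2 x y L0) (proj2 x y σ) ≤ pairCost T x y σ := by
  set S' : List I → List I := fun τ => pairState x y (T (pairPrefix x y τ.length σ))
  have hS'0 : S' [] = proj2 x y L0 := by
    simp [S', pairPrefix, hT0, proj2_eq_pairState hnd hx hy hxy]
  calc optCost (proj2 x y L0) (proj2 x y σ)
      ≤ totalCost S' (proj2 x y σ) :=
        optCost_le_totalCost hS'0 (fun τ => hS'0 ▸ pairState_perm x y _ _) _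
    _ ≤ pairCost T x y σ := by
        simpa [S', proj2, pairPrefix, exchCost_self, totalCost, pairCost] using
          totalCostAux_lazy_le hxy (fun τ => (hT τ).mem_iff.2 hx) σ σ [] rfl

lemma one_le_pairStepCost {x y z : I} {L M : List I}
    (hz : (z = x ∧ Before y x L) ∨ (z = y ∧ Before x y L)) (hx : x ∈ M) (hxy : x ≠ y) :
    1 ≤ pairStepCost x y z L M := by
  have := List.idxOf_ne_idxOf hx hxy
  unfold pairStepCost exchCost accessCost
  rcases hz with ⟨rfl, h⟩ | ⟨rfl, h⟩
  · simp only [true_and, hxy, false_and, or_false]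
    split_ifs <;> omega
  · simp only [true_and, hxy.symm, false_and, false_or]
    split_ifs <;> omega

lemma exists_one_le_pairCost {L0 : List I} {S : List I → List I} (hS : ∀ τ, (S τ).Perm L0)
    {x y : I} (hx : x ∈ L0) (hxy : x ≠ y) : ∃ z, (z = x ∨ z = y) ∧ 1 ≤ pairCost S x y [z] := by
  have hxS : ∀ τ, x ∈ S τ := fun τ => (hS τ).mem_iff.2 hx
  rcases lt_or_gt_of_ne (List.idxOf_ne_idxOf (hxS []) hxy) with h | h
  · exact ⟨y, .inr rfl, one_le_pairStepCost (.inr ⟨rfl, h⟩) (hxS _) hxy⟩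
  · exact ⟨x, .inl rfl, one_le_pairStepCost (.inl ⟨rfl, h⟩) (hxS _) hxy⟩

lemma nonneg_of_pairCost_le {L0 L : List I} {S : List I → List I} (hS : ∀ τ, (S τ).Perm L0)
    {x y : I} (hx : x ∈ L0) (hxy : x ≠ y) {c : ℝ}
    (h : ∀ τ : List I, (∀ z ∈ τ, z = x ∨ z = y) → (pairCost S x y τ : ℝ) ≤ c * optCost L τ) :
    0 ≤ c := by
  obtain ⟨z, hz, hcost⟩ := exists_one_le_pairCost hS hx hxy
  have hle := h [z] (by simpa using hz)
  by_contra! hc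
  have : c * (optCost L [z] : ℝ) ≤ 0 := mul_nonpos_of_nonpos_of_nonneg hc.le (Nat.cast_nonneg _)
  have : (1 : ℝ) ≤ pairCost S x y [z] := by exact_mod_cast hcost
  linarith

end ListUpdate

theorem projective_strictly_competitive_of_two_items_general
    {I : Type} [DecidableEq I]
    (S : List I → List I) (L0 : List I)
    (hnodup : L0.Nodup) (huniv : ∀ x : I, x ∈ L0)
    (hperm : ∀ σ, (S σ).Perm L0)
    (hproj : Projective S) (c : ℝ)
    (h2 : ∀ x y : I, x ≠ y → ∀ τ : List I, (∀ z ∈ τ, z = x ∨ z = y) →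
      (pairCost S x y τ : ℝ) ≤ c * (optCost (proj2 x y L0) τ : ℝ)) :
    ∀ σ : List I, (totalCost S σ : ℝ) ≤ c * (optCost L0 σ : ℝ) := by
  intro σ
  obtain ⟨T, hT0, hT, hTopt⟩ := exists_totalCost_eq_optCost L0 σ
  have hpair : ∀ p ∈ orderedPairs L0,
      (pairCost S p.1 p.2 σ : ℝ) ≤ c * pairCost T p.1 p.2 σ := by
    rintro ⟨x, y⟩ hp
    obtain ⟨⟨hx, hy⟩, hlt⟩ := mem_orderedPairs.1 hp
    have hxy : x ≠ y := by rintro rfl; exact lt_irrefl _ hlt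
    have hc := nonneg_of_pairCost_le hperm hx hxy (h2 x y hxy)
    calc (pairCost S x y σ : ℝ) = pairCost S x y (proj2 x y σ) := by
          rw [pairCost_proj2 hproj]
      _ ≤ c * optCost (proj2 x y L0) (proj2 x y σ) :=
          h2 x y hxy _ fun z hz => mem_of_mem_proj2 hz
      _ ≤ c * pairCost T x y σ := by
          gcongr
          exact optCost_proj2_le_pairCost hnodup hx hy hxy hT0 hT σ
  have hσ : ∀ z ∈ σ, z ∈ L0 := fun z _ => huniv z
  rw [← hTopt, totalCost_eq_sum hnodup hperm σ hσ, totalCost_eq_sum hnodup hT σ hσ,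
    Nat.cast_sum, Nat.cast_sum, Finset.mul_sum]
  exact Finset.sum_le_sum hpair

/-- If a projective deterministic list update algorithm is strictly
`c`-competitive on lists with two items, then it is strictly `c`-competitive on lists
of arbitrary length (partial cost model). -/
theorem projective_strictly_competitive_of_two_items
    {I : Type} [DecidableEq I]
    (S : List I → List I) (L0 : List I)
    (hnodup : L0.Nodup) (huniv : ∀ x : I, x ∈ L0)
    (hinit : S [] = L0) (hperm : ∀ σ, (S σ).Perm L0)
    (hproj : Projective S) (c : ℝ)
    (h2 : ∀ x y : I, x ≠ y → ∀ τ : List I, (∀ z ∈ τ, z = x ∨ z = y) →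
      (pairCost S x y τ : ℝ) ≤ c * (optCost (proj2 x y L0) τ : ℝ)) :
    ∀ σ : List I, (totalCost S σ : ℝ) ≤ c * (optCost L0 σ : ℝ) :=
  projective_strictly_competitive_of_two_items_general S L0 hnodup huniv hperm hproj c h2
end

section
/- The algorithm LMTF, which moves the requested item x in front of all items not requested since the previous request to x (doing nothing on a first request), is not projective: for the initial list [a,b,c] and σ = b a a c b c, the relative order of b and c in S^LMTF(σ) differs from their order in S^LMTF(σ_{bc}). -/
/-- The suffix of `σ` after the last occurrence of `z` (the items requested since the
previous request to `z`). -/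
def afterLast {I : Type} [DecidableEq I] (σ : List I) (z : I) : List I :=
  (σ.reverse.takeWhile (fun w => decide (w ≠ z))).reverse

/-- Insert `z` directly in front of the first element of `L` satisfying `p`
(at the end if there is none). -/
def insertBefore {I : Type} (p : I → Bool) (z : I) : List I → List I
  | [] => [z]
  | w :: rest => if p w then z :: w :: rest else w :: insertBefore p z rest

/-- One step of LMTF: on a request to `z`, if `z` was requested before (in `past`),
move `z` directly in front of the foremost item that has not been requested since the
previous request to `z`; otherwise leave the list unchanged. -/
def lmtfServe {I : Type} [DecidableEq I] (past L : List I) (z : I) : List I :=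
  if z ∈ past then
    insertBefore (fun w => decide (w ∉ afterLast past z)) z (L.erase z)
  else L

def lmtfAux {I : Type} [DecidableEq I] : List I → List I → List I → List I
  | L, _, [] => L
  | L, past, z :: rest => lmtfAux (lmtfServe past L z) (past ++ [z]) rest

/-- State of the LMTF list after serving `σ` from initial list `L0`. -/
def lmtfState {I : Type} [DecidableEq I] (L0 : List I) (σ : List I) : List I :=
  lmtfAux L0 [] σ

/-!
From `[a, b, c]`, serving `b a a c b c` gives `[a, c, b]` just before the final request:
the second request to `b` finds every other item requested since its first request, so `b`
stays at the back, and the final `c` then lands in front of `a`, giving `[c, a, b]`. In the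
projection `b c b c` the item `a` is never requested, so both repeated requests jump in
front of it, giving `[b, c, a]`.
-/

theorem not_projective_of_order_differs {I : Type} [DecidableEq I] {S : List I → List I}
    {x y : I} {σ : List I}
    (h : ¬ (Before x y (S σ) ↔ Before x y (S (proj2 x y σ)))) : ¬ Projective S :=
  fun hS => h (hS x y σ)

theorem proj2_baacbc :
    proj2 (1 : Fin 3) 2 [1, 0, 0, 2, 1, 2] = [1, 2, 1, 2] := by
  decide

theorem lmtfState_baacbc :
    lmtfState [(0 : Fin 3), 1, 2] [1, 0, 0, 2, 1, 2] = [2, 0, 1] := by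
  decide

theorem lmtfState_bcbc :
    lmtfState [(0 : Fin 3), 1, 2] [1, 2, 1, 2] = [1, 2, 0] := by
  decide

/-- LMTF is not projective: for initial list `[a,b,c]` and
`σ = b a a c b c`, the relative order of `b` and `c` in `S^LMTF(σ)` differs from that
in `S^LMTF(σ_{bc})`. -/
theorem lmtf_not_projective :
    let a : Fin 3 := 0; let b : Fin 3 := 1; let c : Fin 3 := 2
    let σ : List (Fin 3) := [b, a, a, c, b, c]
    (¬ (Before b c (lmtfState [a, b, c] σ) ↔
        Before b c (lmtfState [a, b, c] (proj2 b c σ)))) ∧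
      ¬ Projective (lmtfState [a, b, c]) := by
  intro a b c σ
  have h : ¬ (Before b c (lmtfState [a, b, c] σ) ↔
      Before b c (lmtfState [a, b, c] (proj2 b c σ))) := by
    simp only [a, b, c, σ, proj2_baacbc, lmtfState_baacbc, lmtfState_bcbc]
    decide
  exact ⟨h, not_projective_of_order_differs h⟩
end

section
/- The move-to-front rule MTF is projective: for any initial list and any request sequence σ, the relative order of any two items x,y in the MTF list state after σ depends only on the initial order of x,y and on σ_{xy}; specifically, x is in front of y iff (y has never been requested and either x was requested or x was initially in front of y) or the last request to x is more recent than the last request to y. -/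
/-- Move-to-front: each request moves the requested item to the front. -/
def mtfState {I : Type} [DecidableEq I] (L0 : List I) (σ : List I) : List I :=
  σ.foldl (fun L z => z :: L.erase z) L0

/-!
Serving a request to `z ∉ {x, y}` moves `z` to the front without changing the relative order
of `x` and `y`, while serving a request to `x` (resp. `y`) puts it in front of the other. Hence
the relative order of `x` and `y` is decided by the most recent request to one of them, or by
the initial order if neither is ever requested; in particular it only depends on `σ_{xy}`.
-/

section
variable {I : Type} [DecidableEq I] {x y z : I}

theorem before_cons_iff (hxy : x ≠ y) (L : List I) :
    Before x y (z :: L) ↔ z = x ∨ (z ≠ y ∧ Before x y L) := by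
  by_cases hzx : z = x
  · subst hzx; simp [Before, List.idxOf_cons_ne _ hxy]
  by_cases hzy : z = y
  · subst hzy; simp [Before, hzx]
  simp [Before, List.idxOf_cons_ne _ hzx, List.idxOf_cons_ne _ hzy, hzx, hzy]

theorem before_erase_of_ne (hzx : z ≠ x) (hzy : z ≠ y) (L : List I) :
    Before x y (L.erase z) ↔ Before x y L := by
  induction L with
  | nil => rfl
  | cons a L ih =>
    by_cases haz : a = z
    · subst haz
      simp [Before, List.idxOf_cons_ne _ hzx, List.idxOf_cons_ne _ hzy]
    · rw [List.erase_cons_tail (by simpa using haz)]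
      simp only [Before, List.idxOf_cons] at ih ⊢
      cases a == x <;> cases a == y <;> simp [ih]

theorem before_cons_erase_iff (hxy : x ≠ y) (L : List I) :
    Before x y (z :: L.erase z) ↔ z = x ∨ (z ≠ y ∧ Before x y L) := by
  rw [before_cons_iff hxy]
  by_cases hzx : z = x
  · simp [hzx]
  by_cases hzy : z = y
  · simp [hzy]
  rw [before_erase_of_ne hzx hzy]

@[simp]
theorem mtfState_nil (L0 : List I) : mtfState L0 [] = L0 := rfl

@[simp]
theorem mtfState_concat (L0 σ : List I) (z : I) :
    mtfState L0 (σ ++ [z]) = z :: (mtfState L0 σ).erase z := by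
  simp [mtfState]

theorem before_mtfState_filter (hxy : x ≠ y) (L0 : List I) (p : I → Bool) (hpx : p x)
    (hpy : p y) (σ : List I) :
    Before x y (mtfState L0 (σ.filter p)) ↔ Before x y (mtfState L0 σ) := by
  induction σ using List.reverseRecOn with
  | nil => rfl
  | append_singleton σ z ih =>
    rw [List.filter_append, mtfState_concat, before_cons_erase_iff hxy]
    by_cases hz : p z
    · rw [List.filter_singleton, hz, cond_true, mtfState_concat, before_cons_erase_iff hxy, ih]
    · have hzx : z ≠ x := by rintro rfl; exact hz hpx
      have hzy : z ≠ y := by rintro rfl; exact hz hpy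
      simp [hz, hzx, hzy, ih]

theorem before_mtfState_iff (hxy : x ≠ y) (L0 σ : List I) :
    Before x y (mtfState L0 σ) ↔
      (y ∉ σ ∧ (x ∈ σ ∨ Before x y L0)) ∨
      (x ∈ σ ∧ y ∈ σ ∧ σ.reverse.idxOf x < σ.reverse.idxOf y) := by
  induction σ using List.reverseRecOn with
  | nil => simp
  | append_singleton σ z ih =>
    rw [mtfState_concat, before_cons_erase_iff hxy, ih]
    by_cases hzx : z = x
    · subst hzx; simp [List.idxOf_cons_ne _ hxy, Ne.symm hxy, em']
    by_cases hzy : z = y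
    · subst hzy; simp [hzx]
    simp [hzx, hzy, Ne.symm hzx, Ne.symm hzy, List.idxOf_cons_ne _ hzx, List.idxOf_cons_ne _ hzy]

end

theorem mtf_projective_general
    {I : Type} [DecidableEq I] (L0 : List I)
    (x y : I) (hxy : x ≠ y)
    (σ : List I) :
    (Before x y (mtfState L0 σ) ↔ Before x y (mtfState L0 (proj2 x y σ))) ∧
    (Before x y (mtfState L0 σ) ↔
      (y ∉ σ ∧ (x ∈ σ ∨ Before x y L0)) ∨
      (x ∈ σ ∧ y ∈ σ ∧ σ.reverse.idxOf x < σ.reverse.idxOf y)) :=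
  ⟨(before_mtfState_filter hxy L0 _ (by simp) (by simp) σ).symm,
    before_mtfState_iff hxy L0 σ⟩

/-- MTF is projective, and `x` is in front of `y` iff (`y` was never
requested and either `x` was requested or `x` was initially in front of `y`) or the
last request to `x` is more recent than the last request to `y`. -/
theorem mtf_projective
    {I : Type} [DecidableEq I] (L0 : List I) (hnodup : L0.Nodup)
    (x y : I) (hx : x ∈ L0) (hy : y ∈ L0) (hxy : x ≠ y)
    (σ : List I) (hσ : ∀ z ∈ σ, z ∈ L0) :
    (Before x y (mtfState L0 σ) ↔ Before x y (mtfState L0 (proj2 x y σ))) ∧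
    (Before x y (mtfState L0 σ) ↔
      (y ∉ σ ∧ (x ∈ σ ∨ Before x y L0)) ∨
      (x ∈ σ ∧ y ∈ σ ∧ σ.reverse.idxOf x < σ.reverse.idxOf y)) :=
  mtf_projective_general L0 x y hxy σ
end

section
/- If a pair of requests x_(q), y_(l) is an agile pair of a request sequence σ for a deterministic projective algorithm, then the items x and y are adjacent in the list state S(σ). -/
/-- The sequence `σ` with the requests at positions `p` and `p+1` transposed. -/
def SwapAt {I : Type} (σ : List I) (p : ℕ) : List I :=
  σ.take p ++ ((σ.drop p).take 2).reverse ++ σ.drop (p + 2)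

/-- The requests at positions `p`, `p+1` of `σ` are an agile pair of requests to `x`
and `y`: they are adjacent requests to `x` and `y` (in either order) and transposing
them changes the relative order of `x` and `y` in the resulting list state. -/
def AgilePairAt {I : Type} [DecidableEq I] (S : List I → List I)
    (σ : List I) (p : ℕ) (x y : I) : Prop :=
  ((σ[p]? = some x ∧ σ[p + 1]? = some y) ∨
   (σ[p]? = some y ∧ σ[p + 1]? = some x)) ∧
  ¬ (Before x y (S σ) ↔ Before x y (S (SwapAt σ p)))

/-- `x` and `y` are adjacent in the list state `L`. -/
def AdjacentIn {I : Type} (x y : I) (L : List I) : Prop :=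
  ∃ k, (L[k]? = some x ∧ L[k + 1]? = some y) ∨
       (L[k]? = some y ∧ L[k + 1]? = some x)

/-- `τ ∈ perm(x^i y^j)`: exactly `i` requests to `x`, `j` requests to `y`, nothing else. -/
def InPerm {I : Type} [DecidableEq I] (x y : I) (i j : ℕ) (τ : List I) : Prop :=
  τ.count x = i ∧ τ.count y = j ∧ ∀ z ∈ τ, z = x ∨ z = y

/-- The pair of unary projections `x^i`, `y^j` is agile: both relative orders of `x`
and `y` are realized by sequences in `perm(x^i y^j)`. -/
def Agile {I : Type} [DecidableEq I] (S : List I → List I) (x : I) (i : ℕ)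
    (y : I) (j : ℕ) : Prop :=
  ∃ τ τ' : List I, InPerm x y i j τ ∧ InPerm x y i j τ' ∧
    Before x y (S τ) ∧ Before y x (S τ')

/-- `x_(q) ∈ R(x^i)`: in some request sequence `σ` with `i` requests to `x`, the `q`-th
request to `x` forms an agile pair with some request to another item `y`. -/
def InR {I : Type} [DecidableEq I] (S : List I → List I) (x : I) (i q : ℕ) : Prop :=
  ∃ (σ : List I) (y : I) (p : ℕ), σ.count x = i ∧ y ≠ x ∧ AgilePairAt S σ p x y ∧
    ((σ[p]? = some x ∧ (σ.take (p + 1)).count x = q) ∨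
     (σ[p + 1]? = some x ∧ (σ.take (p + 2)).count x = q))

/-!
Transposing the two requests of an agile pair for `x` and `y` leaves the projection of `σ` onto
any other pair of items unchanged, so by projectivity the list states before and after the
transposition disagree only on the relative order of `x` and `y`. In two orderings of the same
items that disagree on exactly one pair, that pair is adjacent: an item strictly between `x` and
`y` would keep its order relative to both of them.
-/

lemma adjacentIn_comm {I : Type} {x y : I} {L : List I} : AdjacentIn x y L ↔ AdjacentIn y x L := by
  simp only [AdjacentIn, or_comm]

section Before

variable {I : Type} [DecidableEq I] {x y : I} {L L' : List I}

lemma before_swap_of_not_before (hx : x ∈ L) (hxy : x ≠ y)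
    (h : ¬ Before x y L) : Before y x L := by
  have hne : L.idxOf x ≠ L.idxOf y := fun he => hxy ((List.idxOf_inj hx).mp he)
  exact lt_of_le_of_ne (not_lt.mp h) hne.symm

lemma not_before_of_not_mem (hx : x ∉ L) : ¬ Before x y L := by
  simpa [Before, List.idxOf_of_notMem hx] using List.idxOf_le_length

lemma before_iff_mem_of_not_mem (hy : y ∉ L) : Before x y L ↔ x ∈ L := by
  rw [Before, List.idxOf_of_notMem hy, List.idxOf_lt_length_iff]

lemma before_iff_of_perm_of_not_mem (h : L.Perm L') (hxy : x ∉ L ∨ y ∉ L) :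
    Before x y L ↔ Before x y L' := by
  rcases hxy with hx | hy
  · exact iff_of_false (not_before_of_not_mem hx) (not_before_of_not_mem (h.mem_iff.not.mp hx))
  · rw [before_iff_mem_of_not_mem hy, before_iff_mem_of_not_mem (h.mem_iff.not.mp hy), h.mem_iff]

lemma adjacentIn_of_before_of_before (hnd : L.Nodup) (hy : y ∈ L)
    (hxy : Before x y L) (hyx : Before y x L')
    (hleft : ∀ z, z ≠ y → Before x z L → Before x z L')
    (hright : ∀ z, z ≠ x → Before z y L → Before z y L') :
    AdjacentIn x y L := by
  have hx : x ∈ L := List.idxOf_lt_length_iff.mp (hxy.trans_le List.idxOf_le_length)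
  suffices hsucc : L.idxOf y = L.idxOf x + 1 by
    exact ⟨L.idxOf x, Or.inl ⟨List.getElem?_idxOf hx, hsucc ▸ List.getElem?_idxOf hy⟩⟩
  -- otherwise the item `z` right after `x` would satisfy `x < z < y` in `L'` as well
  by_contra hne
  have hlt : L.idxOf x + 1 < L.idxOf y := by unfold Before at hxy; omega
  have hlen : L.idxOf x + 1 < L.length := hlt.trans (List.idxOf_lt_length_iff.mpr hy)
  obtain ⟨z, hz⟩ : ∃ z, L.idxOf z = L.idxOf x + 1 := ⟨_, hnd.idxOf_getElem _ hlen⟩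
  have hzx : z ≠ x := by rintro rfl; omega
  have hzy : z ≠ y := by rintro rfl; omega
  have h₁ : Before x z L' := hleft z hzy (by unfold Before; omega)
  have h₂ : Before z y L' := hright z hzx (by unfold Before; omega)
  unfold Before at h₁ h₂ hyx
  omega

end Before

lemma drop_eq_cons_cons_of_getElem? {I : Type} {σ : List I} {p : ℕ} {a b : I}
    (ha : σ[p]? = some a) (hb : σ[p + 1]? = some b) :
    σ.drop p = a :: b :: σ.drop (p + 2) := by
  obtain ⟨hp, rfl⟩ := List.getElem?_eq_some_iff.mp ha
  obtain ⟨hp1, rfl⟩ := List.getElem?_eq_some_iff.mp hb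
  rw [List.drop_eq_getElem_cons hp, List.drop_eq_getElem_cons hp1]

lemma swapAt_eq_of_getElem? {I : Type} {σ : List I} {p : ℕ} {a b : I}
    (ha : σ[p]? = some a) (hb : σ[p + 1]? = some b) :
    SwapAt σ p = σ.take p ++ b :: a :: σ.drop (p + 2) := by
  rw [SwapAt, drop_eq_cons_cons_of_getElem? ha hb]
  simp

lemma proj2_swapAt {I : Type} [DecidableEq I] {σ : List I} {p : ℕ} {a b : I} (s t : I)
    (ha : σ[p]? = some a) (hb : σ[p + 1]? = some b)
    (hab : ¬ ((a = s ∨ a = t) ∧ (b = s ∨ b = t))) :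
    proj2 s t (SwapAt σ p) = proj2 s t σ := by
  conv_rhs => rw [← List.take_append_drop p σ, drop_eq_cons_cons_of_getElem? ha hb]
  rw [swapAt_eq_of_getElem? ha hb, proj2, proj2, List.filter_append, List.filter_append]
  congr 1
  by_cases has : a = s ∨ a = t <;> by_cases hbs : b = s ∨ b = t
  · exact absurd ⟨has, hbs⟩ hab
  all_goals simp [has, hbs]

lemma Projective.before_swapAt_iff {I : Type} [DecidableEq I] {S : List I → List I}
    (hS : Projective S) {σ : List I} {p : ℕ} {a b : I} (s t : I)
    (ha : σ[p]? = some a) (hb : σ[p + 1]? = some b)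
    (hab : ¬ ((a = s ∨ a = t) ∧ (b = s ∨ b = t))) :
    Before s t (S σ) ↔ Before s t (S (SwapAt σ p)) := by
  rw [hS s t σ, hS s t (SwapAt σ p), proj2_swapAt s t ha hb hab]

/-- For a deterministic projective algorithm, if `x_(q)`, `y_(l)` is an
agile pair of `σ`, then `x` and `y` are adjacent in the list state `S(σ)`. -/
theorem agilePair_adjacent
    {I : Type} [DecidableEq I] (S : List I → List I) (L0 : List I)
    (hperm : ∀ σ, (S σ).Perm L0) (hnodup : L0.Nodup)
    (hproj : Projective S)
    (x y : I) (hxy : x ≠ y) (σ : List I) (p : ℕ)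
    (hagile : AgilePairAt S σ p x y) :
    AdjacentIn x y (S σ) := by
  obtain ⟨hpos, hflip⟩ := hagile
  set L := S σ
  set L' := S (SwapAt σ p)
  have hLL' : L.Perm L' := (hperm σ).trans (hperm _).symm
  have hnd : L.Nodup := (hperm σ).nodup_iff.mpr hnodup
  have hsame : ∀ s t, ¬ ((x = s ∨ x = t) ∧ (y = s ∨ y = t)) → (Before s t L ↔ Before s t L') := by
    intro s t hst
    rcases hpos with ⟨ha, hb⟩ | ⟨ha, hb⟩
    · exact hproj.before_swapAt_iff s t ha hb hst
    · exact hproj.before_swapAt_iff s t ha hb (by tauto)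
  obtain ⟨hx, hy⟩ : x ∈ L ∧ y ∈ L := by
    by_contra h
    exact hflip (before_iff_of_perm_of_not_mem hLL' (not_and_or.mp h))
  by_cases hb : Before x y L
  · have hb' : Before y x L' := before_swap_of_not_before (hLL'.subset hx) hxy
      fun h => hflip (iff_of_true hb h)
    exact adjacentIn_of_before_of_before hnd hy hb hb'
      (fun z hz => (hsame x z (by tauto)).mp) (fun z hz => (hsame z y (by tauto)).mp)
  · have hb' : Before x y L' := by_contra fun h => hflip (iff_of_false hb h)
    exact adjacentIn_comm.mp <| adjacentIn_of_before_of_before hnd hx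
      (before_swap_of_not_before hx hxy hb) hb'
      (fun z hz => (hsame y z (by tauto)).mp) (fun z hz => (hsame z x (by tauto)).mp)
end

section
/- In the directed graph G on unary projections with an arc (x^i, y^j) whenever some σ ∈ perm(x^i y^j) satisfies S_{xy}(σ)=[xy], for a projective algorithm on at least three items the arc relation is transitive across distinct items: if (x^i,y^j) ∈ E and (y^j,z^k) ∈ E with x,y,z pairwise distinct, then (x^i,z^k) ∈ E. -/
/-- Arc `(x^i, y^j)` of the graph `G` on unary projections: some `σ ∈ perm(x^i y^j)`
has `S_{xy}(σ) = [xy]`. -/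
def ArcE {I : Type} [DecidableEq I] (S : List I → List I)
    (x : I) (i : ℕ) (y : I) (j : ℕ) : Prop :=
  ∃ σ : List I, InPerm x y i j σ ∧ Before x y (S σ)

/-- Edge relation of `G` on unary projections, viewed as pairs (item, multiplicity). -/
def Edge {I : Type} [DecidableEq I] (S : List I → List I) (a b : I × ℕ) : Prop :=
  a.1 ≠ b.1 ∧ ArcE S a.1 a.2 b.1 b.2

/-!
Take witnesses `σ₁ ∈ perm(x^i y^j)` and `σ₂ ∈ perm(y^j z^k)`. Since both contain exactly `j`
requests to `y`, they can be interleaved into one sequence `σ` whose projection to `{x, y}` is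
`σ₁` and whose projection to `{y, z}` is `σ₂`: merge the two, matching the `y`s one to one.
By projectivity `S(σ)` puts `x` before `y` and `y` before `z`, hence `x` before `z`, and
projectivity again makes `σ_{xz} ∈ perm(x^i z^k)` a witness for the arc `(x^i, z^k)`.
-/

namespace proj2

variable {I : Type} [DecidableEq I] {x y : I}

theorem eq_self {σ : List I} (h : ∀ w ∈ σ, w = x ∨ w = y) : proj2 x y σ = σ :=
  List.filter_eq_self.mpr fun w hw => by simpa using h w hw

theorem eq_nil {σ : List I} (h : ∀ w ∈ σ, w ≠ x ∧ w ≠ y) : proj2 x y σ = [] :=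
  List.filter_eq_nil_iff.mpr fun w hw => by simpa using h w hw

theorem count_left (σ : List I) : (proj2 x y σ).count x = σ.count x :=
  List.count_filter (by simp)

theorem count_right (σ : List I) : (proj2 x y σ).count y = σ.count y :=
  List.count_filter (by simp)

theorem inPerm (σ : List I) : InPerm x y (σ.count x) (σ.count y) (proj2 x y σ) :=
  ⟨count_left σ, count_right σ, fun _ hw => by simpa using List.of_mem_filter hw⟩

end proj2

section Interleave

variable {I : Type} [DecidableEq I] {x y z : I}

/- The merge emits a leading `x` of `s` or a leading `z` of `t` on its own, and a `y` only
when both `s` and `t` start with one. -/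
theorem exists_proj2_eq_of_count_eq (hxy : x ≠ y) (hxz : x ≠ z) (hyz : y ≠ z) :
    ∀ {s t : List I}, (∀ w ∈ s, w = x ∨ w = y) → (∀ w ∈ t, w = y ∨ w = z) →
      s.count y = t.count y → ∃ σ, proj2 x y σ = s ∧ proj2 y z σ = t := by
  intro s
  induction s with
  | nil =>
    intro t _ ht hcount
    have htz : ∀ w ∈ t, w = z := fun w hw =>
      (ht w hw).resolve_left fun hwy => (List.count_pos_iff.mpr (hwy ▸ hw)).ne hcount
    refine ⟨t, proj2.eq_nil fun w hw => ?_, proj2.eq_self ht⟩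
    rw [htz w hw]
    exact ⟨hxz.symm, hyz.symm⟩
  | cons a s ihs =>
    intro t hs ht hcount
    have hs' : ∀ w ∈ s, w = x ∨ w = y := fun w hw => hs w (List.mem_cons_of_mem a hw)
    rcases hs a List.mem_cons_self with ha | ha <;> subst a
    · obtain ⟨σ, h₁, h₂⟩ := ihs hs' ht (by simpa [List.count_cons, hxy] using hcount)
      exact ⟨x :: σ, by simp_all [proj2], by simp_all [proj2]⟩
    · induction t with
      | nil => simp at hcount
      | cons b t iht =>
        have ht' : ∀ w ∈ t, w = y ∨ w = z := fun w hw => ht w (List.mem_cons_of_mem b hw)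
        rcases ht b List.mem_cons_self with hb | hb <;> subst b
        · obtain ⟨σ, h₁, h₂⟩ := ihs hs' ht' (by simpa using hcount)
          exact ⟨y :: σ, by simp_all [proj2], by simp_all [proj2]⟩
        · obtain ⟨σ, h₁, h₂⟩ := iht ht' (by simpa [List.count_cons, hyz.symm] using hcount)
          exact ⟨z :: σ, by simp_all [proj2, hxz.symm, hyz.symm], by simp_all [proj2]⟩

end Interleave

theorem arc_transitive_general
    {I : Type} [DecidableEq I] (S : List I → List I)
    (hproj : Projective S)
    (x y z : I) (hxy : x ≠ y) (hxz : x ≠ z) (hyz : y ≠ z)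
    (i j k : ℕ)
    (h1 : ArcE S x i y j) (h2 : ArcE S y j z k) :
    ArcE S x i z k := by
  obtain ⟨σ₁, ⟨rfl, rfl, hσ₁⟩, hxy₁⟩ := h1
  obtain ⟨σ₂, ⟨hj, rfl, hσ₂⟩, hyz₂⟩ := h2
  obtain ⟨σ, rfl, rfl⟩ := exists_proj2_eq_of_count_eq hxy hxz hyz hσ₁ hσ₂ hj.symm
  have hxyσ : Before x y (S σ) := (hproj x y σ).mpr hxy₁
  have hyzσ : Before y z (S σ) := (hproj y z σ).mpr hyz₂
  rw [proj2.count_left, proj2.count_right]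
  exact ⟨proj2 x z σ, proj2.inPerm σ, (hproj x z σ).mp (hxyσ.trans hyzσ)⟩

/-- For a projective algorithm on at least three items, the arc
relation of `G` is transitive across distinct items:
`(x^i,y^j) ∈ E` and `(y^j,z^k) ∈ E` imply `(x^i,z^k) ∈ E`. -/
theorem arc_transitive
    {I : Type} [DecidableEq I] (S : List I → List I) (L0 : List I)
    (hperm : ∀ σ, (S σ).Perm L0) (hnodup : L0.Nodup)
    (hproj : Projective S)
    (x y z : I) (hxy : x ≠ y) (hxz : x ≠ z) (hyz : y ≠ z)
    (i j k : ℕ)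
    (h1 : ArcE S x i y j) (h2 : ArcE S y j z k) :
    ArcE S x i z k :=
  arc_transitive_general S hproj x y z hxy hxz hyz i j k h1 h2
end

section
/- The algorithm FREQUENCY COUNT, which keeps items sorted by decreasing number of past requests (breaking ties by recency of last request), is not M-regular for any M: after serving x^{M+1} y^M from any initial list, item x is in front of y. -/
/-- FREQUENCY COUNT: the list is kept sorted by decreasing number of past requests;
items with equal counts are ordered by recency of their last request (the initial
order, kept by the stable sort, breaks remaining ties). -/
def fcState {I : Type} [DecidableEq I] (L0 σ : List I) : List I :=
  List.insertionSort
    (fun u v => σ.count v < σ.count u ∨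
      (σ.count u = σ.count v ∧ σ.reverse.idxOf u ≤ σ.reverse.idxOf v)) L0

theorem List.Pairwise.idxOf_lt_idxOf {α : Type*} [BEq α] [LawfulBEq α] {r : α → α → Prop}
    {l : List α} {x y : α} (hl : l.Pairwise r) (hx : x ∈ l) (hy : y ∈ l) (hxy : x ≠ y)
    (hyx : ¬ r y x) : l.idxOf x < l.idxOf y := by
  refine lt_of_le_of_ne (not_lt.1 fun hlt => hyx ?_) fun h => hxy ((List.idxOf_inj hx).1 h)
  simpa only [List.getElem_idxOf] using List.pairwise_iff_getElem.1 hl _ _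
    (List.idxOf_lt_length_of_mem hy) (List.idxOf_lt_length_of_mem hx) hlt

theorem List.idxOf_insertionSort_lt_of_lt {α β : Type*} [BEq α] [LawfulBEq α] [LinearOrder β]
    (f : α → β) {l : List α} {x y : α} (hx : x ∈ l) (hy : y ∈ l) (hfxy : f x < f y) :
    (l.insertionSort fun u v => f u ≤ f v).idxOf x <
      (l.insertionSort fun u v => f u ≤ f v).idxOf y := by
  have : Std.Total fun u v : α => f u ≤ f v := ⟨fun _ _ => le_total _ _⟩
  have : IsTrans α fun u v => f u ≤ f v := ⟨fun _ _ _ => le_trans⟩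
  have hperm := l.perm_insertionSort fun u v => f u ≤ f v
  exact (List.pairwise_insertionSort _ l).idxOf_lt_idxOf (hperm.mem_iff.2 hx)
    (hperm.mem_iff.2 hy) (ne_of_apply_ne f hfxy.ne) hfxy.not_ge

theorem List.idxOf_eq_zero_of_head?_eq_some {α : Type*} [BEq α] [ReflBEq α] {l : List α}
    {a : α} (h : l.head? = some a) : l.idxOf a = 0 := by
  obtain ⟨t, rfl⟩ := List.head?_eq_some_iff.1 h
  exact List.idxOf_cons_self

section FrequencyCount

variable {I : Type} [DecidableEq I]

/-- `ℕᵒᵈ` puts higher counts first; a smaller index in `σ.reverse` means a more recent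
request. -/
def frequencyKey (σ : List I) (u : I) : ℕᵒᵈ ×ₗ ℕ :=
  toLex (OrderDual.toDual (σ.count u), σ.reverse.idxOf u)

theorem fcState_eq_insertionSort_frequencyKey (L0 σ : List I) :
    fcState L0 σ = L0.insertionSort fun u v => frequencyKey σ u ≤ frequencyKey σ v := by
  unfold fcState
  congr
  funext u v
  simp [frequencyKey, Prod.Lex.le_iff]

theorem fcState_before_of_count_lt {L0 σ : List I} {x y : I} (hx : x ∈ L0) (hy : y ∈ L0)
    (hcount : σ.count y < σ.count x) : Before x y (fcState L0 σ) := by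
  rw [fcState_eq_insertionSort_frequencyKey]
  exact List.idxOf_insertionSort_lt_of_lt _ hx hy (Prod.Lex.lt_iff.2 (Or.inl hcount))

end FrequencyCount

theorem frequencyCount_not_M_regular_general
    {I : Type} [DecidableEq I] (L0 : List I)
    (x y : I) (hx : x ∈ L0) (hy : y ∈ L0) (hxy : x ≠ y)
    (M : ℕ) :
    Before x y (fcState L0 (List.replicate (M + 1) x ++ List.replicate M y)) ∧
    ¬ (∀ (σ : List I) (z : I), z ∈ L0 →
        (fcState L0 (σ ++ List.replicate M z)).head? = some z) := by
  have hcount : (List.replicate (M + 1) x ++ List.replicate M y).count y <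
      (List.replicate (M + 1) x ++ List.replicate M y).count x := by
    simp [List.count_replicate, hxy, hxy.symm]
  have hbefore := fcState_before_of_count_lt hx hy hcount
  refine ⟨hbefore, fun hregular => ?_⟩
  have hfront := List.idxOf_eq_zero_of_head?_eq_some (hregular (List.replicate (M + 1) x) y hy)
  rw [Before, hfront] at hbefore
  exact Nat.not_lt_zero _ hbefore

/-- FREQUENCY COUNT is not `M`-regular for any `M`: after serving
`x^{M+1} y^M` from any initial list, item `x` is still in front of `y`; in particular
it is not the case that after every sequence `σ z^M` the item `z` is at the front. -/
theorem frequencyCount_not_M_regular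
    {I : Type} [DecidableEq I] (L0 : List I) (hnodup : L0.Nodup)
    (x y : I) (hx : x ∈ L0) (hy : y ∈ L0) (hxy : x ≠ y)
    (M : ℕ) (hM : 1 ≤ M) :
    Before x y (fcState L0 (List.replicate (M + 1) x ++ List.replicate M y)) ∧
    ¬ (∀ (σ : List I) (z : I), z ∈ L0 →
        (fcState L0 (σ ++ List.replicate M z)).head? = some z) :=
  frequencyCount_not_M_regular_general L0 x y hx hy hxy M
end
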